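/- Let Q_B be the quotient of the polynomial ring ℚ[X₁,X₂,X₃] by the ideal generated by the ten elements X₁³, X₁²X₃, X₁²X₂ + X₁X₃², 6X₁X₂X₃ + X₃³, X₁X₃³, X₁X₂² + X₂X₃², X₂²X₃, X₂X₃³, X₂³, and X₃⁵. Then Q_B is a 14-dimensional ℚ-vector space, and the images of the fourteen monomials 1, X₁, X₁², X₃, X₁X₃, X₂, X₁X₂, X₃², X₁X₃², X₂X₃, X₂², X₃³, X₂X₃², X₃⁴ form a ℚ-basis of Q_B. -/

import Mathlib

open MvPolynomial

/-- The ideal of relations in Theorem B of the paper: generated by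
`X₁³, X₁²X₃, X₁²X₂ + X₁X₃², 6X₁X₂X₃ + X₃³, X₁X₃³, X₁X₂² + X₂X₃², X₂²X₃, X₂X₃³, X₂³, X₃⁵`,
where `X₁ = X 0`, `X₂ = X 1`, `X₃ = X 2`. -/
noncomputable def thmBIdeal : Ideal (MvPolynomial (Fin 3) ℚ) :=
  Ideal.span {(X 0) ^ 3, (X 0) ^ 2 * X 2, (X 0) ^ 2 * X 1 + X 0 * (X 2) ^ 2,
    6 * (X 0 * X 1 * X 2) + (X 2) ^ 3, X 0 * (X 2) ^ 3,
    X 0 * (X 1) ^ 2 + X 1 * (X 2) ^ 2, (X 1) ^ 2 * X 2,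
    X 1 * (X 2) ^ 3, (X 1) ^ 3, (X 2) ^ 5}

/-- The quotient ring `Q_B = ℚ[X₁,X₂,X₃]/thmBIdeal`. -/
noncomputable abbrev Q_B : Type := MvPolynomial (Fin 3) ℚ ⧸ thmBIdeal

/-- The fourteen monomials
`1, X₁, X₁², X₃, X₁X₃, X₂, X₁X₂, X₃², X₁X₃², X₂X₃, X₂², X₃³, X₂X₃², X₃⁴` in `ℚ[X₁,X₂,X₃]`. -/
noncomputable def thmBMonomials : Fin 14 → MvPolynomial (Fin 3) ℚ :=
  ![1, X 0, (X 0) ^ 2, X 2, X 0 * X 2, X 1, X 0 * X 1, (X 2) ^ 2,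
    X 0 * (X 2) ^ 2, X 1 * X 2, (X 1) ^ 2, (X 2) ^ 3, X 1 * (X 2) ^ 2, (X 2) ^ 4]

/-!
Write `c_{abc}` for the coefficient of `X₁^a X₂^b X₃^c`. The linear form
`socle p = 6 c₀₀₄ - c₁₁₂ + c₂₂₀` (the dual socle generator of the Gorenstein ring `Q_B`, whose
socle sits in degree 4) vanishes on every generator times every monomial, hence on the ideal.
Pairing the fourteen monomials with fourteen complementary monomials through `socle` gives a
matrix that is diagonal up to one invertible `2 × 2` block, so their images are linearly
independent. Conversely, each monomial reduces modulo the generators to a multiple of one of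
the fourteen, so they span.
-/

theorem LinearMap.map_eq_zero_of_mem_ideal_span {R A M : Type*} [CommSemiring R]
    [CommSemiring A] [Algebra R A] [AddCommMonoid M] [Module R M] (L : A →ₗ[R] M) {S : Set A}
    (hS : ∀ g ∈ S, ∀ q, L (q * g) = 0) {p : A} (hp : p ∈ Ideal.span S) : L p = 0 := by
  suffices ∀ q, L (q * p) = 0 by simpa using this 1
  induction hp using Submodule.span_induction with
  | mem g hg => exact hS g hg
  | zero => simp
  | add x y _ _ hx hy => intro q; rw [mul_add, map_add, hx, hy, add_zero]
  | smul a x _ hx => intro q; rw [smul_eq_mul, ← mul_assoc]; exact hx _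

theorem linearIndependent_mk_of_pairing {R A ι κ : Type*} [CommRing R] [CommRing A]
    [Algebra R A] (I : Ideal A) (L : A →ₗ[R] R) (hL : ∀ p ∈ I, L p = 0) (q : κ → A)
    (m : ι → A) (h : LinearIndependent R fun j i => L (q i * m j)) :
    LinearIndependent R fun j => Ideal.Quotient.mk I (m j) := by
  rw [linearIndependent_iff'] at h ⊢
  intro s c hc
  have hmem : ∑ j ∈ s, c j • m j ∈ I := by
    rw [← Ideal.Quotient.eq_zero_iff_mem, ← Ideal.Quotient.mkₐ_eq_mk R, map_sum]
    simpa only [map_smul, Ideal.Quotient.mkₐ_eq_mk] using hc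
  refine h s c (funext fun i => ?_)
  simpa [Finset.mul_sum, mul_smul_comm] using hL _ (I.mul_mem_left (q i) hmem)

theorem MvPolynomial.eq_top_of_mk_monomial_mem {R σ : Type*} [CommRing R]
    {I : Ideal (MvPolynomial σ R)} (N : Submodule R (MvPolynomial σ R ⧸ I))
    (h : ∀ u, Ideal.Quotient.mk I (monomial u 1) ∈ N) : N = ⊤ := by
  refine N.eq_top_iff'.2 fun x => ?_
  obtain ⟨p, rfl⟩ := Ideal.Quotient.mk_surjective x
  induction p using MvPolynomial.induction_on' with
  | monomial u a =>
    rw [← mul_one a, ← smul_eq_mul, ← smul_monomial, ← Ideal.Quotient.mkₐ_eq_mk R, map_smul]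
    exact N.smul_mem a (h u)
  | add p q hp hq => rw [map_add]; exact N.add_mem hp hq

namespace Q_B

noncomputable def mono (e : ℕ × ℕ × ℕ) : MvPolynomial (Fin 3) ℚ :=
  X 0 ^ e.1 * X 1 ^ e.2.1 * X 2 ^ e.2.2

theorem mono_add (e f : ℕ × ℕ × ℕ) : mono (e + f) = mono e * mono f := by
  simp only [mono, Prod.fst_add, Prod.snd_add, pow_add]; ring

theorem X_zero_mul_mono (e : ℕ × ℕ × ℕ) : X 0 * mono e = mono ((1, 0, 0) + e) := by
  rw [mono_add]; simp [mono]

theorem X_one_mul_mono (e : ℕ × ℕ × ℕ) : X 1 * mono e = mono ((0, 1, 0) + e) := by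
  rw [mono_add]; simp [mono]

theorem X_two_mul_mono (e : ℕ × ℕ × ℕ) : X 2 * mono e = mono ((0, 0, 1) + e) := by
  rw [mono_add]; simp [mono]

theorem monomial_one_eq_mono (u : Fin 3 →₀ ℕ) : monomial u 1 = mono (u 0, u 1, u 2) := by
  rw [monomial_eq, Finsupp.prod_fintype _ _ (by simp), Fin.prod_univ_three, C_1, one_mul, mono]

theorem coeff_mono (u : Fin 3 →₀ ℕ) (e : ℕ × ℕ × ℕ) :
    coeff u (mono e) = if (u 0, u 1, u 2) = e then 1 else 0 := by
  rw [mono, X_pow_eq_monomial, X_pow_eq_monomial, X_pow_eq_monomial, monomial_mul,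
    monomial_mul, coeff_monomial]
  refine if_congr ⟨?_, ?_⟩ (by norm_num) rfl
  · rintro rfl
    simp
  · rintro rfl
    ext i
    fin_cases i <;> simp

def socleWeight (e : ℕ × ℕ × ℕ) : ℚ :=
  if e = (0, 0, 4) then 6 else if e = (1, 1, 2) then -1 else if e = (2, 2, 0) then 1 else 0

noncomputable def socle : MvPolynomial (Fin 3) ℚ →ₗ[ℚ] ℚ :=
  6 • lcoeff ℚ (Finsupp.single 2 4) -
    lcoeff ℚ (Finsupp.single 0 1 + Finsupp.single 1 1 + Finsupp.single 2 2) +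
    lcoeff ℚ (Finsupp.single 0 2 + Finsupp.single 1 2)

theorem socle_mono (e : ℕ × ℕ × ℕ) : socle (mono e) = socleWeight e := by
  simp only [socle, Fin.isValue, LinearMap.add_apply, LinearMap.sub_apply, LinearMap.smul_apply,
    lcoeff_apply, coeff_mono, ne_eq, Fin.reduceEq, not_false_eq_true, Finsupp.single_eq_of_ne,
    Finsupp.single_eq_same, eq_comm (b := e), smul_ite, nsmul_eq_mul, Nat.cast_ofNat, mul_one,
    Finsupp.coe_add, Pi.add_apply, zero_ne_one, add_zero, one_ne_zero, zero_add,
    socleWeight]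
  split_ifs <;> simp_all

theorem socle_six_mul (p : MvPolynomial (Fin 3) ℚ) : socle (6 * p) = 6 * socle p := by
  rw [← map_ofNat C, ← smul_eq_C_mul, map_smul, smul_eq_mul]

theorem socle_mul_eq_zero_of_forall_mono {g : MvPolynomial (Fin 3) ℚ}
    (h : ∀ e, socle (mono e * g) = 0) (q : MvPolynomial (Fin 3) ℚ) : socle (q * g) = 0 := by
  induction q using MvPolynomial.induction_on' with
  | monomial u r =>
    rw [show monomial u r = r • monomial u 1 by rw [smul_monomial, smul_eq_mul, mul_one],
      smul_mul_assoc, map_smul, monomial_one_eq_mono, h, smul_zero]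
  | add p q hp hq => rw [add_mul, map_add, hp, hq, add_zero]

theorem socle_eq_zero_of_mem {p : MvPolynomial (Fin 3) ℚ} (hp : p ∈ thmBIdeal) :
    socle p = 0 := by
  refine socle.map_eq_zero_of_mem_ideal_span
    (fun g hg => socle_mul_eq_zero_of_forall_mono fun e => ?_) hp
  obtain ⟨a, b, c⟩ := e
  simp only [Set.mem_insert_iff, Set.mem_singleton_iff] at hg
  rw [mul_comm]
  rcases hg with rfl | rfl | rfl | rfl | rfl | rfl | rfl | rfl | rfl | rfl <;>
  simp only [add_mul, mul_assoc, pow_succ, pow_zero, one_mul, X_zero_mul_mono, X_one_mul_mono,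
    X_two_mul_mono, map_add, socle_six_mul, socle_mono, socleWeight, Prod.mk_add_mk,
    Prod.mk.injEq] <;>
  grind

def basisExp : Fin 14 → ℕ × ℕ × ℕ :=
  ![(0, 0, 0), (1, 0, 0), (2, 0, 0), (0, 0, 1), (1, 0, 1), (0, 1, 0), (1, 1, 0), (0, 0, 2),
    (1, 0, 2), (0, 1, 1), (0, 2, 0), (0, 0, 3), (0, 1, 2), (0, 0, 4)]

/-- `dualExp i + basisExp j` is one of the three exponents seen by `socle` only when `i = j`, and
for `{i, j} = {6, 7}` (the monomials `X₁X₂` and `X₃²`). -/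
def dualExp : Fin 14 → ℕ × ℕ × ℕ :=
  ![(0, 0, 4), (0, 1, 2), (0, 2, 0), (0, 0, 3), (0, 1, 1), (2, 1, 0), (1, 1, 0), (0, 0, 2),
    (0, 1, 0), (1, 0, 1), (2, 0, 0), (0, 0, 1), (1, 0, 0), (0, 0, 0)]

theorem thmBMonomials_eq_mono (j : Fin 14) : thmBMonomials j = mono (basisExp j) := by
  fin_cases j <;> simp [thmBMonomials, basisExp, mono]

theorem linearIndependent_socleWeight :
    LinearIndependent ℚ fun j i => socleWeight (dualExp i + basisExp j) := by
  rw [Fintype.linearIndependent_iff]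
  intro c hc
  simp only [funext_iff, Fin.forall_fin_succ, IsEmpty.forall_iff, and_true] at hc
  simp only [socleWeight, dualExp, basisExp, Fin.isValue, Finset.sum_apply, Pi.smul_apply,
    Matrix.cons_val_zero, add_eq_left, smul_eq_mul, mul_ite, Fin.sum_univ_succ, Prod.mk_eq_zero,
    and_self, ↓reduceIte, Matrix.cons_val_succ, mul_neg, mul_one, mul_zero, one_ne_zero, and_true,
    Prod.mk_add_mk, zero_add, add_zero, Prod.mk.injEq, zero_ne_one, Nat.reduceEqDiff, and_false,
    OfNat.one_ne_ofNat, OfNat.zero_ne_ofNat, OfNat.ofNat_ne_zero, OfNat.ofNat_ne_one,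
    Nat.reduceAdd, Finset.univ_unique, Fin.default_eq_zero, Matrix.cons_val_fin_one,
    Finset.sum_const_zero, Pi.zero_apply, mul_eq_zero, or_false, Fin.succ_zero_eq_one,
    Matrix.cons_val_one, Nat.succ_ne_self, neg_eq_zero, Fin.succ_one_eq_two, Matrix.cons_val,
    Fin.reduceSucc, Finset.sum_singleton] at hc
  obtain ⟨h0, h1, h2, h3, h4, h5, h6, h7, h8, h9, h10, h11, h12, h13⟩ := hc
  have hc7 : c 7 = 0 := by linarith
  intro j
  fin_cases j <;> simp only [Fin.zero_eta, Fin.mk_one, Fin.reduceFinMk] <;> linarith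

theorem linearIndependent_mk_thmBMonomials :
    LinearIndependent ℚ fun i => Ideal.Quotient.mk thmBIdeal (thmBMonomials i) := by
  refine linearIndependent_mk_of_pairing thmBIdeal socle (fun _ => socle_eq_zero_of_mem)
    (mono ∘ dualExp) thmBMonomials ?_
  simpa only [Function.comp_apply, thmBMonomials_eq_mono, ← mono_add, socle_mono]
    using linearIndependent_socleWeight

noncomputable def basisSpan : Submodule ℚ Q_B :=
  Submodule.span ℚ (Set.range fun i => Ideal.Quotient.mk thmBIdeal (thmBMonomials i))

theorem mk_mono_mem_of_basisExp {e : ℕ × ℕ × ℕ} (j : Fin 14) (h : basisExp j = e) :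
    Ideal.Quotient.mk thmBIdeal (mono e) ∈ basisSpan :=
  Submodule.subset_span ⟨j, by simp only [thmBMonomials_eq_mono, h]⟩

theorem mk_mem_of_eq_mul {p : MvPolynomial (Fin 3) ℚ} (g : MvPolynomial (Fin 3) ℚ)
    (hg : g ∈ thmBIdeal) (f : ℕ × ℕ × ℕ) (h : p = mono f * g) :
    Ideal.Quotient.mk thmBIdeal p ∈ basisSpan := by
  rw [Ideal.Quotient.eq_zero_iff_mem.2 (h ▸ Ideal.mul_mem_left _ _ hg)]
  exact zero_mem _

theorem mk_mem_of_smul_add_eq_mul {p q : MvPolynomial (Fin 3) ℚ} (g : MvPolynomial (Fin 3) ℚ)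
    (hg : g ∈ thmBIdeal) (f : ℕ × ℕ × ℕ) {s : ℚ} (hs : s ≠ 0) (h : s • p + q = mono f * g)
    (hq : Ideal.Quotient.mk thmBIdeal q ∈ basisSpan) :
    Ideal.Quotient.mk thmBIdeal p ∈ basisSpan := by
  have hpq : Ideal.Quotient.mk thmBIdeal (s • p + q) = 0 :=
    Ideal.Quotient.eq_zero_iff_mem.2 (h ▸ Ideal.mul_mem_left _ _ hg)
  rw [← Ideal.Quotient.mkₐ_eq_mk ℚ, map_add, map_smul, add_eq_zero_iff_eq_neg,
    ← eq_inv_smul_iff₀ hs] at hpq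
  rw [← Ideal.Quotient.mkₐ_eq_mk ℚ, hpq]
  exact Submodule.smul_mem _ _ (neg_mem hq)

theorem mk_mono_zero_mem_basisSpan (b c : ℕ) :
    Ideal.Quotient.mk thmBIdeal (mono (0, b, c)) ∈ basisSpan := by
  rcases b with _ | _ | _ | b
  · rcases c with _ | _ | _ | _ | _ | c
    exacts [mk_mono_mem_of_basisExp 0 rfl, mk_mono_mem_of_basisExp 3 rfl,
      mk_mono_mem_of_basisExp 7 rfl, mk_mono_mem_of_basisExp 11 rfl,
      mk_mono_mem_of_basisExp 13 rfl,
      mk_mem_of_eq_mul (X 2 ^ 5) (Ideal.subset_span (by simp)) (0, 0, c)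
        (by rw [mono, mono]; ring)]
  · rcases c with _ | _ | _ | c
    exacts [mk_mono_mem_of_basisExp 5 rfl, mk_mono_mem_of_basisExp 9 rfl,
      mk_mono_mem_of_basisExp 12 rfl,
      mk_mem_of_eq_mul (X 1 * X 2 ^ 3) (Ideal.subset_span (by simp)) (0, 0, c)
        (by rw [mono, mono]; ring)]
  · rcases c with _ | c
    exacts [mk_mono_mem_of_basisExp 10 rfl,
      mk_mem_of_eq_mul (X 1 ^ 2 * X 2) (Ideal.subset_span (by simp)) (0, 0, c)
        (by rw [mono, mono]; ring)]
  · exact mk_mem_of_eq_mul (X 1 ^ 3) (Ideal.subset_span (by simp)) (0, b, c)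
      (by rw [mono, mono]; ring)

theorem mk_mono_one_mem_basisSpan (b c : ℕ) :
    Ideal.Quotient.mk thmBIdeal (mono (1, b, c)) ∈ basisSpan := by
  rcases b with _ | _ | b
  · rcases c with _ | _ | _ | c
    exacts [mk_mono_mem_of_basisExp 1 rfl, mk_mono_mem_of_basisExp 4 rfl,
      mk_mono_mem_of_basisExp 8 rfl,
      mk_mem_of_eq_mul (X 0 * X 2 ^ 3) (Ideal.subset_span (by simp)) (0, 0, c)
        (by rw [mono, mono]; ring)]
  · rcases c with _ | c
    · exact mk_mono_mem_of_basisExp 6 rfl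
    · exact mk_mem_of_smul_add_eq_mul (6 * (X 0 * X 1 * X 2) + X 2 ^ 3)
        (Ideal.subset_span (by simp)) (0, 0, c) (s := 6) (by norm_num)
        (by rw [mono, mono, mono, smul_eq_C_mul, map_ofNat]; ring)
        (mk_mono_zero_mem_basisSpan 0 (c + 3))
  · exact mk_mem_of_smul_add_eq_mul (X 0 * X 1 ^ 2 + X 1 * X 2 ^ 2)
      (Ideal.subset_span (by simp)) (0, b, c) one_ne_zero
      (by rw [mono, mono, mono, one_smul]; ring) (mk_mono_zero_mem_basisSpan (b + 1) (c + 2))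

theorem mk_mono_two_mem_basisSpan (b c : ℕ) :
    Ideal.Quotient.mk thmBIdeal (mono (2, b, c)) ∈ basisSpan := by
  rcases b with _ | b
  · rcases c with _ | c
    · exact mk_mono_mem_of_basisExp 2 rfl
    · exact mk_mem_of_eq_mul (X 0 ^ 2 * X 2) (Ideal.subset_span (by simp)) (0, 0, c)
        (by rw [mono, mono]; ring)
  · exact mk_mem_of_smul_add_eq_mul (X 0 ^ 2 * X 1 + X 0 * X 2 ^ 2)
      (Ideal.subset_span (by simp)) (0, b, c) one_ne_zero
      (by rw [mono, mono, mono, one_smul]; ring) (mk_mono_one_mem_basisSpan b (c + 2))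

theorem mk_mono_mem_basisSpan : ∀ e, Ideal.Quotient.mk thmBIdeal (mono e) ∈ basisSpan
  | (0, b, c) => mk_mono_zero_mem_basisSpan b c
  | (1, b, c) => mk_mono_one_mem_basisSpan b c
  | (2, b, c) => mk_mono_two_mem_basisSpan b c
  | (a + 3, b, c) =>
    mk_mem_of_eq_mul (X 0 ^ 3) (Ideal.subset_span (by simp)) (a, b, c) (by rw [mono, mono]; ring)

theorem basisSpan_eq_top : basisSpan = ⊤ :=
  eq_top_of_mk_monomial_mem _ fun u => monomial_one_eq_mono u ▸ mk_mono_mem_basisSpan _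

end Q_B

theorem Q_B_finrank_and_basis :
    Module.finrank ℚ Q_B = 14 ∧
    LinearIndependent ℚ (fun i => Ideal.Quotient.mk thmBIdeal (thmBMonomials i)) ∧
    Submodule.span ℚ
      (Set.range (fun i => Ideal.Quotient.mk thmBIdeal (thmBMonomials i))) = ⊤ := by
  have hli := Q_B.linearIndependent_mk_thmBMonomials
  have hspan := Q_B.basisSpan_eq_top
  refine ⟨?_, hli, hspan⟩
  rw [Module.finrank_eq_card_basis (Module.Basis.mk hli hspan.ge), Fintype.card_fin]
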